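/- arXiv:1301.4168 — 5 statements merged into one kernel-verified Lean document; each statement's English description precedes it below -/
import Mathlib

section
/- Let 0 < π < 1 and consider the single-variable herding dynamics w^{(t)} = w^{(t-1)} + π − 𝟙[w^{(t-1)} > 0], with x^{(t)} = 𝟙[w^{(t-1)} > 0]. If w^{(s)} ∈ (π−1, π], then for every T ∈ ℕ, the count ∑_{t=s+1}^{s+T} x^{(t)} lies in the interval [Tπ − 1, Tπ + 1]. -/
/-- The count of ones emitted by single-variable herding over a window of
length T lies in [Tπ − 1, Tπ + 1]. -/
theorem herding_count_ones (p : ℝ) (hp0 : 0 < p) (hp1 : p < 1)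
    (w x : ℕ → ℝ)
    (hx : ∀ t : ℕ, x (t + 1) = if 0 < w t then 1 else 0)
    (hw : ∀ t : ℕ, w (t + 1) = w t + p - x (t + 1))
    (s : ℕ) (hs : w s ∈ Set.Ioc (p - 1) p) (T : ℕ) :
    ∑ t ∈ Finset.Icc (s + 1) (s + T), x t ∈ Set.Icc ((T : ℝ) * p - 1) ((T : ℝ) * p + 1) := by
  have key : ∀ T : ℕ, w (s + T) ∈ Set.Ioc (p - 1) p ∧
      ∑ t ∈ Finset.Icc (s + 1) (s + T), x t = T * p + w s - w (s + T) := by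
    intro T
    induction T with
    | zero => simpa using hs
    | succ n ih =>
      obtain ⟨⟨h1, h2⟩, hsum⟩ := ih
      have hstep : w (s + n + 1) ∈ Set.Ioc (p - 1) p := by
        rw [hw (s + n), hx (s + n)]
        split_ifs with h
        · constructor <;> simp <;> linarith
        · push_neg at h
          constructor <;> simp <;> linarith
      constructor
      · rwa [show s + (n + 1) = s + n + 1 by ring]
      · rw [show s + (n + 1) = s + n + 1 by ring,
          Finset.sum_Icc_succ_top (by omega : s + 1 ≤ s + n + 1),
          hsum, hw (s + n)]
        push_cast
        ring
  obtain ⟨⟨h1, h2⟩, hsum⟩ := key T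
  obtain ⟨hs1, hs2⟩ := hs
  rw [hsum]
  constructor <;> simp <;> linarith
end

section
/- Under single-variable herding with w^{(s)} ∈ (π−1, π], the empirical frequency P_T := (1/T) ∑_{t=s+1}^{s+T} 𝟙[x^{(t)} = 1] satisfies |P_T − π| ≤ 1/T for all T ≥ 1. In particular, P_T → π at rate O(1/T). -/
/-- The empirical frequency of ones produced by single-variable herding
matches π with error at most 1/T. -/
theorem herding_empirical_rate (p : ℝ) (hp0 : 0 < p) (hp1 : p < 1)
    (w x : ℕ → ℝ)
    (hx : ∀ t : ℕ, x (t + 1) = if 0 < w t then 1 else 0)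
    (hw : ∀ t : ℕ, w (t + 1) = w t + p - x (t + 1))
    (s : ℕ) (hs : w s ∈ Set.Ioc (p - 1) p) :
    ∀ T : ℕ, 1 ≤ T →
      |(1 / (T : ℝ)) * ∑ t ∈ Finset.Icc (s + 1) (s + T), (if x t = 1 then (1 : ℝ) else 0) - p|
        ≤ 1 / (T : ℝ) := by
  -- x takes values 0 or 1
  have hx01 : ∀ t : ℕ, x (t + 1) = 0 ∨ x (t + 1) = 1 := by
    intro t
    rw [hx t]
    by_cases h : 0 < w t <;> simp [h]
  -- invariance
  have hinv : ∀ k : ℕ, w (s + k) ∈ Set.Ioc (p - 1) p := by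
    intro k
    induction k with
    | zero => simpa using hs
    | succ k ih =>
      obtain ⟨h1, h2⟩ := ih
      have := hw (s + k)
      rw [hx (s + k)] at this
      by_cases h : 0 < w (s + k)
      · simp only [if_pos h] at this
        constructor
        · rw [show s + (k+1) = s + k + 1 by ring, this]; linarith
        · rw [show s + (k+1) = s + k + 1 by ring, this]; linarith
      · push_neg at h
        simp only [if_neg (not_lt.mpr h)] at this
        constructor
        · rw [show s + (k+1) = s + k + 1 by ring, this]; linarith
        · rw [show s + (k+1) = s + k + 1 by ring, this]; linarith
  -- telescoping: w (s+T) = w s + T * p - sum x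
  have htel : ∀ T : ℕ, w (s + T) = w s + T * p - ∑ t ∈ Finset.Icc (s + 1) (s + T), x t := by
    intro T
    induction T with
    | zero => simp
    | succ T ih =>
      have hsum : ∑ t ∈ Finset.Icc (s + 1) (s + T + 1), x t
          = (∑ t ∈ Finset.Icc (s + 1) (s + T), x t) + x (s + T + 1) := by
        rw [Finset.sum_Icc_succ_top (by omega)]
      rw [show s + (T + 1) = (s + T) + 1 by ring, hw (s + T), ih, hsum]
      push_cast
      ring
  -- sum of indicators equals sum of x over the interval
  have hind : ∀ T : ℕ, ∑ t ∈ Finset.Icc (s + 1) (s + T), (if x t = 1 then (1 : ℝ) else 0)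
      = ∑ t ∈ Finset.Icc (s + 1) (s + T), x t := by
    intro T
    apply Finset.sum_congr rfl
    intro t ht
    simp only [Finset.mem_Icc] at ht
    obtain ⟨u, rfl⟩ : ∃ u, t = u + 1 := ⟨t - 1, by omega⟩
    rcases hx01 u with h | h <;> simp [h]
  intro T hT
  have hTpos : (0 : ℝ) < T := by exact_mod_cast hT
  rw [hind T]
  have hkey : |∑ t ∈ Finset.Icc (s + 1) (s + T), x t - T * p| ≤ 1 := by
    have h1 := hinv 0
    have h2 := hinv T
    have := htel T
    simp only [Nat.add_zero] at h1
    rw [abs_le]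
    constructor
    · have : ∑ t ∈ Finset.Icc (s + 1) (s + T), x t = w s + T * p - w (s + T) := by linarith
      rw [this]
      have := h1.1; have := h2.2; linarith
    · have : ∑ t ∈ Finset.Icc (s + 1) (s + T), x t = w s + T * p - w (s + T) := by linarith
      rw [this]
      have := h1.2; have := h2.1; linarith
  have heq : (1 / (T:ℝ)) * ∑ t ∈ Finset.Icc (s + 1) (s + T), x t - p
      = (1 / T) * (∑ t ∈ Finset.Icc (s + 1) (s + T), x t - T * p) := by
    field_simp
  rw [heq, abs_mul, abs_of_pos (show (0:ℝ) < 1/T by positivity)]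
  calc (1 / (T:ℝ)) * |∑ t ∈ Finset.Icc (s + 1) (s + T), x t - T * p|
      ≤ (1 / T) * 1 := by
        apply mul_le_mul_of_nonneg_left hkey (by positivity)
    _ = 1 / T := mul_one _
end

section
/- For single-variable herding with arbitrary initialization w^{(0)} ∈ ℝ (possibly outside (π−1, π]), the weight sequence enters the invariant interval (π−1, π] after finitely many steps, and the number of steps of the transient period is at most ⌈|w^{(0)}|/min(π, 1−π)⌉ + 1. -/
/-- From an arbitrary initialization, single-variable herding enters the
invariant interval (π−1, π] within at most ⌈|w⁰| / min(π, 1−π)⌉ + 1 steps. -/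
theorem herding_transient_period (p : ℝ) (hp0 : 0 < p) (hp1 : p < 1)
    (w : ℕ → ℝ)
    (hw : ∀ t : ℕ, w (t + 1) = w t + p - (if 0 < w t then 1 else 0)) :
    ∃ t : ℕ, t ≤ ⌈|w 0| / min p (1 - p)⌉₊ + 1 ∧ w t ∈ Set.Ioc (p - 1) p := by
  set m := min p (1 - p) with hm
  have hm0 : 0 < m := lt_min hp0 (by linarith)
  have key : ∀ n : ℕ, ∀ t : ℕ, |w t| ≤ n * m →
      ∃ s ≤ n + 1, w (t + s) ∈ Set.Ioc (p - 1) p := by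
    intro n
    induction n with
    | zero =>
      intro t ht
      refine ⟨0, by norm_num, ?_⟩
      simp only [Nat.cast_zero, zero_mul] at ht
      have h0 : w t = 0 := abs_eq_zero.mp (le_antisymm ht (abs_nonneg _))
      simp only [Set.mem_Ioc]
      constructor <;> simp [h0] <;> linarith
    | succ n ih =>
      intro t ht
      by_cases h0 : w t ∈ Set.Ioc (p - 1) p
      · exact ⟨0, by omega, h0⟩
      simp only [Set.mem_Ioc, not_and_or] at h0
      rcases h0 with h1 | h2
      · -- w t ≤ p - 1
        push_neg at h1
        have hwt : ¬ (0 < w t) := by push_neg; linarith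
        have hstep : w (t + 1) = w t + p := by simp [hw t, hwt]
        by_cases h2 : p - 1 < w (t + 1)
        · exact ⟨1, by omega, ⟨h2, by rw [hstep]; linarith⟩⟩
        · push_neg at h2
          have habs : |w (t + 1)| ≤ n * m := by
            rw [abs_of_nonpos (by linarith : w (t+1) ≤ 0), hstep]
            rw [abs_of_nonpos (by linarith : w t ≤ 0)] at ht
            have hmp : m ≤ p := min_le_left _ _
            push_cast at ht ⊢
            nlinarith
          obtain ⟨s, hs, hmem⟩ := ih (t + 1) habs
          exact ⟨s + 1, by omega, by rwa [show t + (s + 1) = t + 1 + s by omega]⟩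
      · -- p < w t
        push_neg at h2
        have hwt : 0 < w t := lt_trans hp0 h2
        have hstep : w (t + 1) = w t - (1 - p) := by
          rw [hw t, if_pos hwt]; ring
        by_cases h3 : w (t + 1) ≤ p
        · exact ⟨1, by omega, ⟨by rw [hstep]; linarith, h3⟩⟩
        · push_neg at h3
          have habs : |w (t + 1)| ≤ n * m := by
            rw [abs_of_pos (by linarith : 0 < w (t+1)), hstep]
            rw [abs_of_pos hwt] at ht
            have hmp : m ≤ 1 - p := min_le_right _ _
            push_cast at ht ⊢
            nlinarith
          obtain ⟨s, hs, hmem⟩ := ih (t + 1) habs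
          exact ⟨s + 1, by omega, by rwa [show t + (s + 1) = t + 1 + s by omega]⟩
  have hbound : |w 0| ≤ (⌈|w 0| / m⌉₊ : ℝ) * m := by
    rw [← div_le_iff₀ hm0]
    exact Nat.le_ceil _
  obtain ⟨s, hs, hmem⟩ := key _ 0 hbound
  exact ⟨s, hs, by simpa using hmem⟩
end

section
/- The single-variable herding dynamics on the invariant interval is conjugate to a rotation: under the bijection w ↦ w mod 1 mapping (π−1, π] to (0,1] (with 1 mod 1 := 1), the herding update w^{(t)} = w^{(t-1)} + π − 𝟙[w^{(t-1)} > 0] corresponds to v^{(t)} = (v^{(t-1)} + π) mod 1, and x^{(t)} = 1 if and only if v^{(t-1)} < π (equivalently v^{(t-1)} ∈ (0, π] up to endpoint conventions). -/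
/-! On `(p - 1, p]` the coordinate `v = w - ⌈w⌉ + 1` equals `w` for `w > 0` and `w + 1` for
`w ≤ 0`, so the emitted bit `𝟙[w > 0]` is `𝟙[v ≤ p]`. The herding step and the rotation step both
send `w` to `w + p` minus an integer, and `x ↦ x - ⌈x⌉ + 1` is invariant under integer shifts. -/

namespace Int

variable {R : Type*} [CommRing R] [LinearOrder R] [FloorRing R]

theorem sub_ceil_add_one_mem_Ioc [IsStrictOrderedRing R] (a : R) :
    a - ⌈a⌉ + 1 ∈ Set.Ioc (0 : R) 1 :=
  ⟨by linarith [ceil_lt_add_one a], by linarith [le_ceil a]⟩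

theorem sub_intCast_sub_ceil [IsOrderedRing R] (a : R) (z : ℤ) : a - z - ⌈a - z⌉ = a - ⌈a⌉ := by
  rw [ceil_sub_intCast]
  push_cast
  ring

theorem sub_ceil_add_one_of_pos_of_le_one {a : R} (h0 : 0 < a) (h1 : a ≤ 1) :
    a - ⌈a⌉ + 1 = a := by
  rw [ceil_eq_iff (z := 1) |>.mpr ⟨by simpa using h0, by simpa using h1⟩]
  push_cast
  ring

theorem sub_ceil_add_one_of_neg_one_lt_of_nonpos {a : R} (h0 : -1 < a) (h1 : a ≤ 0) :
    a - ⌈a⌉ + 1 = a + 1 := by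
  rw [ceil_eq_zero_iff.mpr ⟨h0, h1⟩]
  push_cast
  ring

end Int

open Int in
/-- On the invariant interval, single-variable herding is conjugate, via the
map w ↦ w mod 1 := w − ⌈w⌉ + 1 onto (0,1], to the rotation v ↦ (v + π) mod 1, and the
emitted bit is 1 exactly when the rotated coordinate lies in (0, π]. -/
theorem herding_conjugate_rotation (p : ℝ) (hp0 : 0 < p) (hp1 : p < 1) :
    ∀ w : ℝ, w ∈ Set.Ioc (p - 1) p →
      (w - (⌈w⌉ : ℝ) + 1) ∈ Set.Ioc (0 : ℝ) 1 ∧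
      ((w + p - (if 0 < w then 1 else 0)) - (⌈w + p - (if 0 < w then 1 else 0)⌉ : ℝ) + 1)
        = ((w - (⌈w⌉ : ℝ) + 1) + p) - (⌈(w - (⌈w⌉ : ℝ) + 1) + p⌉ : ℝ) + 1 ∧
      ((0 < w) ↔ (w - (⌈w⌉ : ℝ) + 1) ≤ p) := by
  rintro w ⟨hw_gt, hw_le⟩
  refine ⟨sub_ceil_add_one_mem_Ioc w, ?_, ?_⟩
  · have herding_step :
        w + p - (if 0 < w then 1 else 0) = w + p - ((if 0 < w then 1 else 0 : ℤ) : ℝ) := by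
      split_ifs <;> simp
    have rotation_step : w - ⌈w⌉ + 1 + p = w + p - ((⌈w⌉ - 1 : ℤ) : ℝ) := by
      push_cast
      ring
    rw [herding_step, rotation_step, sub_intCast_sub_ceil, sub_intCast_sub_ceil]
  · by_cases hw : 0 < w
    · rw [sub_ceil_add_one_of_pos_of_le_one hw (by linarith)]
      simpa [hw] using hw_le
    · rw [sub_ceil_add_one_of_neg_one_lt_of_nonpos (by linarith) (not_lt.mp hw)]
      simp only [hw, false_iff, not_le]
      linarith
end

section
/- (Linear visiting rate) Suppose the graph is fully connected, herded Gibbs scans variables in a fixed order, and the corresponding Gibbs Markov chain is irreducible. Then there exist constants l > 0 and B > 0 such that for every i ∈ [1, N], every state x in the support 𝒳_+ of π, every T ∈ ℕ, and every s ∈ ℕ: ∑_{k=s}^{s+T−1} 𝟙[X^{(Nk+i)} = x] ≥ l·T − B. Moreover one may take l = π_min^{t*} and B = τ* π_min^{t*} + ∑_{j=0}^{t*−1} π_min^j · 2^{min(N,j)}, where t* is the length of a positive-probability Gibbs path connecting any state to any other and τ* = ⌈t*/N⌉. -/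
open Finset

/-- Joint states of `N` binary variables. -/
abbrev GState (N : ℕ) := Fin N → Bool

/-- Full conditional probability π(Xᵢ = b | x₋ᵢ) for a target distribution π. -/
noncomputable def condProb {N : ℕ} (π : GState N → ℝ) (i : Fin N) (x : GState N)
    (b : Bool) : ℝ :=
  π (Function.update x i b) / (π (Function.update x i true) + π (Function.update x i false))

/-- Variable updated at step `t ≥ 1` of a fixed systematic scan (step kN + i with
1 ≤ i ≤ N updates the i-th variable, i.e. index i − 1). -/
def scanVar (N : ℕ) (hN : 0 < N) (t : ℕ) : Fin N := ⟨(t - 1) % N, Nat.mod_lt _ hN⟩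

/-- A herded Gibbs trajectory on a fully connected graph of `N` binary variables with
target `π`: one weight per variable `i` and per assignment of all the other variables
(weights are indexed by full states but only the off-`i` coordinates matter); at step
`t+1` the scanned variable emits 𝟙[w > 0] and only its active weight is updated. -/
structure HerdedGibbs (N : ℕ) (hN : 0 < N) (π : GState N → ℝ) where
  X : ℕ → GState N
  W : ℕ → Fin N → GState N → ℝ
  init_support : 0 < π (X 0)
  init_w : ∀ i x, condProb π i x true - 1 < W 0 i x ∧ W 0 i x ≤ condProb π i x true
  step_other : ∀ t j, j ≠ scanVar N hN (t + 1) → X (t + 1) j = X t j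
  step_cur : ∀ t, X (t + 1) (scanVar N hN (t + 1))
      = decide (0 < W t (scanVar N hN (t + 1)) (X t))
  w_active : ∀ t x, (∀ j, j ≠ scanVar N hN (t + 1) → x j = X t j) →
      W (t + 1) (scanVar N hN (t + 1)) x
        = W t (scanVar N hN (t + 1)) x + condProb π (scanVar N hN (t + 1)) x true
          - (if X (t + 1) (scanVar N hN (t + 1)) = true then 1 else 0)
  w_frozen : ∀ t i x, ¬(i = scanVar N hN (t + 1) ∧ ∀ j, j ≠ i → x j = X t j) →
      W (t + 1) i x = W t i x

/-- Transition matrix 𝒯ᵢ of regular Gibbs updating variable `i`. -/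
noncomputable def stepKernel {N : ℕ} (π : GState N → ℝ) (i : Fin N) :
    Matrix (GState N) (GState N) ℝ :=
  fun x y => if ∀ j, j ≠ i → x j = y j then condProb π i x (y i) else 0

/-- Full-sweep Gibbs transition kernel 𝒯 = 𝒯₁𝒯₂⋯𝒯_N. -/
noncomputable def sweepKernel {N : ℕ} (π : GState N → ℝ) :
    Matrix (GState N) (GState N) ℝ :=
  (List.ofFn fun i : Fin N => stepKernel π i).prod

/-- Total variation distance d_v(μ − ν) = ‖μ − ν‖₁ / 2 on a finite state space. -/
noncomputable def tvDist {α : Type*} [Fintype α] (μ ν : α → ℝ) : ℝ :=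
  (∑ x, |μ x - ν x|) / 2

/-- Dobrushin ergodic coefficient of a transition matrix. -/
noncomputable def dobrushin {α : Type*} [Fintype α] (K : Matrix α α ℝ) : ℝ :=
  ⨆ x, ⨆ x', tvDist (K x) (K x')

/-- Empirical distribution of `T` end-of-sweep samples starting at sweep `τ`. -/
noncomputable def empDist {N : ℕ} (X : ℕ → GState N) (τ T : ℕ) : GState N → ℝ :=
  fun x => (((Finset.Ico τ (τ + T)).filter fun k => X (k * N) = x).card : ℝ) / T

/-- N_num: number of occurrences of the joint state (x₋ᵢ, b) at substep `i` of sweeps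
τ, …, τ+T−1. -/
def empNum {N : ℕ} (hN : 0 < N) (X : ℕ → GState N) (τ T i : ℕ) (x : GState N)
    (b : Bool) : ℕ :=
  ((Finset.Ico τ (τ + T)).filter fun k =>
    (∀ j, j ≠ scanVar N hN i → X (k * N + i) j = x j)
      ∧ X (k * N + i) (scanVar N hN i) = b).card

/-- N_den: number of occurrences of the conditioning state x₋ᵢ at substep `i − 1`. -/
def empDen {N : ℕ} (hN : 0 < N) (X : ℕ → GState N) (τ T i : ℕ) (x : GState N) : ℕ :=
  ((Finset.Ico τ (τ + T)).filter fun k =>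
    ∀ j, j ≠ scanVar N hN i → X (k * N + i - 1) j = x j).card

/-- Empirical herded Gibbs single-step transition kernel T̃⁽ᵗ⁾_{T,i}; entries with an
unvisited conditioning state are set to the regular Gibbs kernel. -/
noncomputable def empStepKernel {N : ℕ} (hN : 0 < N) (π : GState N → ℝ)
    (X : ℕ → GState N) (τ T i : ℕ) : Matrix (GState N) (GState N) ℝ :=
  fun x y => if ∀ j, j ≠ scanVar N hN i → x j = y j then
      (if empDen hN X τ T i x = 0 then condProb π (scanVar N hN i) x (y (scanVar N hN i))
       else (empNum hN X τ T i x (y (scanVar N hN i)) : ℝ) / (empDen hN X τ T i x : ℝ))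
    else 0

/-- Empirical full-sweep herded Gibbs kernel T̃⁽ᵗ⁾_T = T̃⁽ᵗ⁾_{T,1}⋯T̃⁽ᵗ⁾_{T,N}. -/
noncomputable def empSweepKernel {N : ℕ} (hN : 0 < N) (π : GState N → ℝ)
    (X : ℕ → GState N) (τ T : ℕ) : Matrix (GState N) (GState N) ℝ :=
  (List.ofFn fun i : Fin N => empStepKernel hN π X τ T (i + 1)).prod

/-!
Every conditioning class `(i, x₋ᵢ)` herds: its weight stays in an interval of length `3`, so
over any window of sweeps the number of times it emits `b` differs from `π(b | x₋ᵢ)` times the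
number of visits to the class by less than `3`. Irreducibility gives a single length
`L = n N + i` such that every support state reaches `x` by a positive-probability Gibbs path
following the scan. Count, at each step `j ≤ L` of the sweeps of a window, the visits to the
states that can still reach `x` in the remaining `L - j` steps: herding passes a fraction
`π_min` of them on, up to an error of `3` per state, so at step `L` the state `x` has been
visited `π_min ^ L T - O(1)` times. The constants of the required form come from taking `t*`
large.
-/

namespace Matrix

variable {α : Type*} [Fintype α]

theorem mul_apply_nonneg {A B : Matrix α α ℝ} (hA : ∀ x y, 0 ≤ A x y) (hB : ∀ x y, 0 ≤ B x y)
    (x z : α) : 0 ≤ (A * B) x z :=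
  Finset.sum_nonneg fun y _ => mul_nonneg (hA x y) (hB y z)

theorem mul_apply_pos_iff {A B : Matrix α α ℝ} (hA : ∀ x y, 0 ≤ A x y) (hB : ∀ x y, 0 ≤ B x y)
    (x z : α) : 0 < (A * B) x z ↔ ∃ y, 0 < A x y ∧ 0 < B y z := by
  rw [mul_apply, Finset.sum_pos_iff_of_nonneg fun y _ => mul_nonneg (hA x y) (hB y z)]
  simp only [Finset.mem_univ, true_and, mul_pos_iff, (hA _ _).not_gt, false_and, or_false]

end Matrix

theorem pow_mul_sub_le_of_forall_lt {c : ℕ → ℝ} {a b : ℝ} (ha0 : 0 ≤ a) (ha1 : a ≤ 1)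
    (hb : 0 ≤ b) {L : ℕ} (h : ∀ j < L, a * c j - b ≤ c (j + 1)) :
    a ^ L * c 0 - L * b ≤ c L := by
  induction L with
  | zero => simp
  | succ L ih =>
    have hL := mul_le_mul_of_nonneg_left (ih fun j hj => h j (by omega)) ha0
    have hstep := h L (by omega)
    have hLb : a * (L * b) ≤ L * b := mul_le_of_le_one_left (by positivity) ha1
    rw [pow_succ, mul_comm _ a, mul_assoc]
    push_cast
    linarith

theorem abs_sub_card_filter_lt_of_herding {w : ℕ → ℝ} {a e : ℕ → Prop} [DecidablePred a]
    [DecidablePred e] {p lo hi : ℝ}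
    (hstep : ∀ k, w (k + 1) = w k + if a k then p - if e k then 1 else 0 else 0)
    (hbdd : ∀ k, w k ∈ Set.Ioc lo hi) (s T : ℕ) :
    |p * #{k ∈ Ico s (s + T) | a k} - #{k ∈ Ico s (s + T) | a k ∧ e k}| < hi - lo := by
  have htel : w (s + T) - w s
      = p * #{k ∈ Ico s (s + T) | a k} - #{k ∈ Ico s (s + T) | a k ∧ e k} := by
    rw [← Finset.sum_Ico_sub w (Nat.le_add_right s T)]
    simp only [hstep, add_sub_cancel_left, Finset.sum_ite, Finset.sum_sub_distrib,
      Finset.sum_const, Finset.filter_filter, nsmul_eq_mul]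
    ring
  rw [← htel, abs_sub_lt_iff]
  obtain ⟨h1, h2⟩ := hbdd (s + T)
  obtain ⟨h3, h4⟩ := hbdd s
  constructor <;> linarith

section ConditionalProbability

variable {N : ℕ} {π : GState N → ℝ}

theorem condProb_congr {i : Fin N} {x y : GState N} (h : ∀ j, j ≠ i → x j = y j) (b : Bool) :
    condProb π i x b = condProb π i y b := by
  have hupd : ∀ c, Function.update x i c = Function.update y i c := fun c => by
    ext j
    by_cases hj : j = i
    · subst hj; simp
    · simp [hj, h j hj]
  simp only [condProb, hupd]

theorem condProb_nonneg (hπ0 : ∀ x, 0 ≤ π x) (i : Fin N) (x : GState N) (b : Bool) :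
    0 ≤ condProb π i x b :=
  div_nonneg (hπ0 _) (add_nonneg (hπ0 _) (hπ0 _))

theorem condProb_true_add_condProb_false_le (i : Fin N) (x : GState N) :
    condProb π i x true + condProb π i x false ≤ 1 := by
  rw [condProb, condProb, ← add_div]
  exact div_self_le_one _

theorem condProb_le_one (hπ0 : ∀ x, 0 ≤ π x) (i : Fin N) (x : GState N) (b : Bool) :
    condProb π i x b ≤ 1 := by
  have := condProb_true_add_condProb_false_le (π := π) i x
  cases b
  · linarith [condProb_nonneg hπ0 i x true]
  · linarith [condProb_nonneg hπ0 i x false]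

theorem condProb_self_pos (hπ0 : ∀ x, 0 ≤ π x) {x : GState N} (hx : 0 < π x) (i : Fin N) :
    0 < condProb π i x (x i) := by
  rw [condProb, Function.update_eq_self]
  refine div_pos hx ?_
  cases hxi : x i
  · rw [← hxi, Function.update_eq_self]
    exact add_pos_of_nonneg_of_pos (hπ0 _) hx
  · rw [← hxi, Function.update_eq_self]
    exact add_pos_of_pos_of_nonneg hx (hπ0 _)

theorem condProb_true_add_condProb_false (hπ0 : ∀ x, 0 ≤ π x) {x : GState N} (hx : 0 < π x)
    (i : Fin N) : condProb π i x true + condProb π i x false = 1 := by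
  have hself := condProb_self_pos hπ0 hx i
  rw [condProb, condProb, ← add_div, div_self]
  intro hden
  rw [condProb, hden, div_zero] at hself
  exact hself.false

theorem pos_of_condProb_pos (hπ0 : ∀ x, 0 ≤ π x) {i : Fin N} {x : GState N} {b : Bool}
    (h : 0 < condProb π i x b) : 0 < π (Function.update x i b) :=
  (hπ0 _).lt_of_ne fun h0 => h.ne' (by rw [condProb, ← h0, zero_div])

end ConditionalProbability

section Scan

variable {N : ℕ} (hN : 0 < N)

theorem scanVar_mul_add_succ (k t : ℕ) :
    scanVar N hN (k * N + t + 1) = scanVar N hN (t + 1) := by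
  simp [scanVar, Nat.add_comm (k * N), Nat.add_mul_mod_self_right]

theorem scanVar_add_ne {t r : ℕ} (hr0 : 0 < r) (hrN : r < N) :
    scanVar N hN (t + r + 1) ≠ scanVar N hN (t + 1) := by
  intro h
  have hmod : (t + r) % N = t % N := by simpa [scanVar, Fin.ext_iff] using h
  have hdvd : N ∣ r := by
    simpa using (Nat.modEq_iff_dvd' (Nat.le_add_right t r)).mp hmod.symm
  exact absurd (Nat.le_of_dvd hr0 hdvd) (not_le.mpr hrN)

end Scan

section Kernels

variable {N : ℕ} {π : GState N → ℝ}

theorem stepKernel_nonneg (hπ0 : ∀ x, 0 ≤ π x) (i : Fin N) (x y : GState N) :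
    0 ≤ stepKernel π i x y := by
  unfold stepKernel
  split_ifs
  exacts [condProb_nonneg hπ0 i x _, le_rfl]

theorem stepKernel_pos_iff {i : Fin N} {x y : GState N} :
    0 < stepKernel π i x y ↔ (∀ j, j ≠ i → x j = y j) ∧ 0 < condProb π i x (y i) := by
  unfold stepKernel
  split_ifs with h
  · exact ⟨fun hp => ⟨h, hp⟩, And.right⟩
  · simp [h]

variable (π) (hN : 0 < N)

noncomputable def scanKernel : ℕ → ℕ → Matrix (GState N) (GState N) ℝ
  | _, 0 => 1
  | t, m + 1 => stepKernel π (scanVar N hN (t + 1)) * scanKernel (t + 1) m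

variable {π}

theorem scanKernel_nonneg (hπ0 : ∀ x, 0 ≤ π x) (t m : ℕ) (x y : GState N) :
    0 ≤ scanKernel π hN t m x y := by
  induction m generalizing t x y with
  | zero =>
    rw [scanKernel, Matrix.one_apply]
    split_ifs <;> norm_num
  | succ m ih =>
    exact Matrix.mul_apply_nonneg (stepKernel_nonneg hπ0 _) (ih (t + 1)) x y

theorem scanKernel_add (t m m' : ℕ) :
    scanKernel π hN t (m + m') = scanKernel π hN t m * scanKernel π hN (t + m) m' := by
  induction m generalizing t with
  | zero => simp [scanKernel]
  | succ m ih =>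
    rw [Nat.add_right_comm, scanKernel, scanKernel, ih, Matrix.mul_assoc,
      Nat.add_right_comm t 1 m, Nat.add_assoc t]

theorem scanKernel_succ_pos_iff (hπ0 : ∀ x, 0 ≤ π x) {t m : ℕ} {x z : GState N} :
    0 < scanKernel π hN t (m + 1) x z ↔
      ∃ y, 0 < stepKernel π (scanVar N hN (t + 1)) x y ∧ 0 < scanKernel π hN (t + 1) m y z :=
  Matrix.mul_apply_pos_iff (stepKernel_nonneg hπ0 _) (scanKernel_nonneg hN hπ0 _ _) x z

theorem scanKernel_self_pos (hπ0 : ∀ x, 0 ≤ π x) {x : GState N} (hx : 0 < π x) (t m : ℕ) :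
    0 < scanKernel π hN t m x x := by
  induction m generalizing t with
  | zero => simp [scanKernel]
  | succ m ih =>
    refine (scanKernel_succ_pos_iff hN hπ0).2 ⟨x, stepKernel_pos_iff.2 ⟨fun _ _ => rfl, ?_⟩, ih _⟩
    exact condProb_self_pos hπ0 hx _

theorem list_ofFn_prod_stepKernel (m t : ℕ) (g : Fin m → Fin N)
    (hg : ∀ r : Fin m, g r = scanVar N hN (t + r + 1)) :
    (List.ofFn fun r => stepKernel π (g r)).prod = scanKernel π hN t m := by
  induction m generalizing t with
  | zero => simp [scanKernel]
  | succ m ih =>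
    rw [List.ofFn_succ, List.prod_cons, scanKernel, hg 0,
      ih (t + 1) (fun r => g r.succ) fun r => by rw [hg]; congr 1; simp; omega]
    rfl

theorem sweepKernel_eq_scanKernel (k : ℕ) : sweepKernel π = scanKernel π hN (k * N) N :=
  list_ofFn_prod_stepKernel hN N _ id fun r => by
    rw [scanVar_mul_add_succ]
    ext
    simp [scanVar, Nat.mod_eq_of_lt r.isLt]

theorem sweepKernel_pow_eq_scanKernel (n : ℕ) :
    sweepKernel π ^ n = scanKernel π hN 0 (n * N) := by
  induction n with
  | zero => simp [scanKernel]
  | succ n ih =>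
    rw [pow_succ, ih, sweepKernel_eq_scanKernel hN n, Nat.succ_mul, scanKernel_add, zero_add]

theorem exists_scanKernel_pos_of_irreducible (hπ0 : ∀ x, 0 ≤ π x)
    (hirr : ∀ x y : GState N, 0 < π x → 0 < π y → ∃ n : ℕ, 0 < (sweepKernel π ^ n) x y) :
    ∃ n : ℕ, ∀ y x : GState N, 0 < π y → 0 < π x → ∀ i,
      0 < scanKernel π hN 0 (n * N + i) y x := by
  choose! f hf using hirr
  refine ⟨Finset.univ.sup fun p : GState N × GState N => f p.1 p.2, fun y x hy hx i => ?_⟩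
  obtain ⟨d, hd⟩ := Nat.exists_eq_add_of_le
    (Finset.le_sup (f := fun p : GState N × GState N => f p.1 p.2) (Finset.mem_univ (y, x)))
  rw [hd, add_mul, add_assoc, scanKernel_add, zero_add]
  refine (Matrix.mul_apply_pos_iff (scanKernel_nonneg hN hπ0 _ _)
    (scanKernel_nonneg hN hπ0 _ _) y x).2 ⟨x, ?_, scanKernel_self_pos hN hπ0 hx _ _⟩
  rw [← sweepKernel_pow_eq_scanKernel]
  exact hf y x hy hx

end Kernels

section Visits

variable {N : ℕ}

theorem empDen_succ (hN : 0 < N) (X : ℕ → GState N) (s T t : ℕ) (y : GState N) :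
    empDen hN X s T (t + 1) y =
      #{k ∈ Ico s (s + T) | ∀ j, j ≠ scanVar N hN (t + 1) → X (k * N + t) j = y j} := by
  simp only [empDen, ← Nat.add_assoc, Nat.add_sub_cancel]

theorem empNum_self (hN : 0 < N) (X : ℕ → GState N) (s T i : ℕ) (y : GState N) :
    empNum hN X s T i y (y (scanVar N hN i)) = #{k ∈ Ico s (s + T) | X (k * N + i) = y} := by
  unfold empNum
  congr 1
  refine Finset.filter_congr fun k _ => ⟨fun ⟨hoff, hv⟩ => funext fun j => ?_, fun h => ?_⟩
  · by_cases hj : j = scanVar N hN i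
    · rw [hj, hv]
    · exact hoff j hj
  · subst h; exact ⟨fun _ _ => rfl, rfl⟩

def visitsIn (X : ℕ → GState N) (s T t : ℕ) (F : Finset (GState N)) : ℕ :=
  #{k ∈ Ico s (s + T) | X (k * N + t) ∈ F}

theorem sum_visitsIn_singleton (X : ℕ → GState N) (s T t : ℕ) (F : Finset (GState N)) :
    ∑ w ∈ F, visitsIn X s T t {w} = visitsIn X s T t F := by
  rw [visitsIn, Finset.card_eq_sum_card_fiberwise (f := fun k => X (k * N + t))
    (s := {k ∈ Ico s (s + T) | X (k * N + t) ∈ F}) fun k hk => (Finset.mem_filter.1 hk).2]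
  refine Finset.sum_congr rfl fun w hw => ?_
  rw [visitsIn, Finset.filter_filter]
  congr 1
  exact Finset.filter_congr fun k _ => by
    simp only [Finset.mem_singleton]
    exact ⟨fun h => ⟨h ▸ hw, h⟩, fun h => h.2⟩

theorem visitsIn_add_mul_le (X : ℕ → GState N) (s T n t : ℕ) (F : Finset (GState N)) :
    visitsIn X s (T - n) (n * N + t) F ≤ visitsIn X s T t F := by
  refine Finset.card_le_card_of_injOn (· + n) (fun k hk => ?_) fun a _ b _ h => by simpa using h
  rw [Finset.mem_coe, Finset.mem_filter, Finset.mem_Ico] at hk ⊢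
  dsimp only
  refine ⟨by omega, ?_⟩
  rw [add_mul, add_assoc]
  exact hk.2

end Visits

namespace HerdedGibbs

variable {N : ℕ} {hN : 0 < N} {π : GState N → ℝ} (hg : HerdedGibbs N hN π)

theorem X_succ (t : ℕ) :
    hg.X (t + 1) = Function.update (hg.X t) (scanVar N hN (t + 1))
      (hg.X (t + 1) (scanVar N hN (t + 1))) := by
  ext j
  by_cases hj : j = scanVar N hN (t + 1)
  · subst hj; simp
  · rw [Function.update_of_ne hj, hg.step_other t j hj]

theorem W_succ (t : ℕ) (i : Fin N) (x : GState N) :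
    hg.W (t + 1) i x = hg.W t i x +
      if i = scanVar N hN (t + 1) ∧ ∀ j, j ≠ i → x j = hg.X t j then
        condProb π i x true - if hg.X (t + 1) i = true then 1 else 0
      else 0 := by
  by_cases h : i = scanVar N hN (t + 1) ∧ ∀ j, j ≠ i → x j = hg.X t j
  · obtain ⟨rfl, hx⟩ := h
    rw [if_pos ⟨rfl, hx⟩, hg.w_active t x hx, add_sub_assoc]
  · rw [if_neg h, hg.w_frozen t i x h, add_zero]

theorem X_succ_scanVar_eq_true_iff (t : ℕ) :
    hg.X (t + 1) (scanVar N hN (t + 1)) = true ↔ 0 < hg.W t (scanVar N hN (t + 1)) (hg.X t) := by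
  rw [hg.step_cur, decide_eq_true_iff]

theorem W_sub_W {i : Fin N} {x y : GState N} (h : ∀ j, j ≠ i → x j = y j) (t : ℕ) :
    hg.W t i x - hg.W t i y = hg.W 0 i x - hg.W 0 i y := by
  induction t with
  | zero => rfl
  | succ t ih =>
    have hiff : (∀ j, j ≠ i → x j = hg.X t j) ↔ ∀ j, j ≠ i → y j = hg.X t j :=
      forall₂_congr fun j hj => by rw [h j hj]
    rw [hg.W_succ, hg.W_succ, condProb_congr h]
    simp only [hiff]
    split_ifs <;> linarith

/-- Only the weight at the current state is herded within `(p - 1, p]`; the other weights of its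
class receive the same increments and so stay within distance `1` of it (`W_sub_W`). -/
theorem W_mem_Ioc (hπ0 : ∀ x, 0 ≤ π x) (t : ℕ) (i : Fin N) (x : GState N) :
    hg.W t i x ∈ Set.Ioc (condProb π i x true - 2) (condProb π i x true + 1) := by
  induction t generalizing x with
  | zero =>
    obtain ⟨h1, h2⟩ := hg.init_w i x
    constructor <;> linarith
  | succ t ih =>
    obtain ⟨ih1, ih2⟩ := ih x
    have hp0 := condProb_nonneg hπ0 i x true
    have hp1 := condProb_le_one hπ0 i x true
    rw [hg.W_succ]
    by_cases hact : i = scanVar N hN (t + 1) ∧ ∀ j, j ≠ i → x j = hg.X t j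
    · obtain ⟨rfl, hx⟩ := hact
      have hx' : ∀ j, j ≠ scanVar N hN (t + 1) → hg.X t j = x j := fun j hj => (hx j hj).symm
      have hdrive := hg.W_sub_W hx' t
      have hinit := hg.init_w (scanVar N hN (t + 1)) (hg.X t)
      have hinit' := hg.init_w (scanVar N hN (t + 1)) x
      rw [condProb_congr hx'] at hinit
      rw [if_pos ⟨rfl, hx⟩]
      simp only [hg.X_succ_scanVar_eq_true_iff]
      split_ifs <;> constructor <;> linarith [hinit.1, hinit.2, hinit'.1, hinit'.2]
    · rw [if_neg hact]
      constructor <;> linarith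

theorem W_nonpos_of_condProb_eq_zero {i : Fin N} {x : GState N} (hp : condProb π i x true = 0)
    (t : ℕ) : hg.W t i x ≤ 0 := by
  induction t with
  | zero => exact (hg.init_w i x).2.trans_eq hp
  | succ t ih =>
    rw [hg.W_succ, hp]
    split_ifs <;> linarith

theorem W_pos_of_condProb_eq_one {i : Fin N} {x : GState N} (hp : condProb π i x true = 1)
    (t : ℕ) : 0 < hg.W t i x := by
  induction t with
  | zero => linarith [(hg.init_w i x).1]
  | succ t ih =>
    rw [hg.W_succ, hp]
    split_ifs <;> linarith

theorem condProb_X_succ_pos (hπ0 : ∀ x, 0 ≤ π x) {t : ℕ} (hx : 0 < π (hg.X t)) :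
    0 < condProb π (scanVar N hN (t + 1)) (hg.X t) (hg.X (t + 1) (scanVar N hN (t + 1))) := by
  set v := scanVar N hN (t + 1)
  have hsum := condProb_true_add_condProb_false hπ0 hx v
  have hp0 := condProb_nonneg hπ0 v (hg.X t)
  cases hemit : hg.X (t + 1) v
  · have hW := not_lt.1 (mt (hg.X_succ_scanVar_eq_true_iff t).2 (by simp [v, hemit]))
    have hp1 : condProb π v (hg.X t) true ≠ 1 := fun h =>
      (hg.W_pos_of_condProb_eq_one h t).not_ge hW
    exact lt_of_le_of_ne (hp0 false) fun h => hp1 (by linarith)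
  · have hW := (hg.X_succ_scanVar_eq_true_iff t).1 hemit
    exact lt_of_le_of_ne (hp0 true) fun h => (hg.W_nonpos_of_condProb_eq_zero h.symm t).not_gt hW

theorem pi_X_pos (hπ0 : ∀ x, 0 ≤ π x) (t : ℕ) : 0 < π (hg.X t) := by
  induction t with
  | zero => exact hg.init_support
  | succ t ih =>
    rw [hg.X_succ]
    exact pos_of_condProb_pos hπ0 (hg.condProb_X_succ_pos hπ0 ih)

theorem W_add_eq_of_lt (t : ℕ) (y : GState N) {r : ℕ} (hr : r < N) :
    hg.W (t + 1 + r) (scanVar N hN (t + 1)) y = hg.W (t + 1) (scanVar N hN (t + 1)) y := by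
  induction r with
  | zero => rfl
  | succ r ih =>
    have hne : scanVar N hN (t + 1 + r + 1) ≠ scanVar N hN (t + 1) := by
      simpa only [Nat.add_right_comm t 1 r, Nat.add_assoc t r 1] using
        scanVar_add_ne hN (t := t) (Nat.succ_pos r) hr
    rw [← Nat.add_assoc, hg.w_frozen _ _ _ fun h => hne h.1.symm, ih (by omega)]

theorem W_sweep_succ (t k : ℕ) (y : GState N) :
    hg.W ((k + 1) * N + t) (scanVar N hN (t + 1)) y = hg.W (k * N + t) (scanVar N hN (t + 1)) y +
      if ∀ j, j ≠ scanVar N hN (t + 1) → hg.X (k * N + t) j = y j then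
        condProb π (scanVar N hN (t + 1)) y true -
          if hg.X (k * N + t + 1) (scanVar N hN (t + 1)) = true then 1 else 0
      else 0 := by
  have hscan := scanVar_mul_add_succ hN k t
  have hsweep : (k + 1) * N + t = k * N + t + 1 + (N - 1) := by
    rw [Nat.succ_mul]; omega
  rw [hsweep, ← hscan, hg.W_add_eq_of_lt _ _ (Nat.sub_lt hN one_pos), hg.W_succ]
  simp only [true_and, eq_comm (a := y _)]

theorem empNum_succ (s T t : ℕ) (y : GState N) (b : Bool) :
    empNum hN hg.X s T (t + 1) y b =
      #{k ∈ Ico s (s + T) | (∀ j, j ≠ scanVar N hN (t + 1) → hg.X (k * N + t) j = y j) ∧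
        hg.X (k * N + t + 1) (scanVar N hN (t + 1)) = b} := by
  unfold empNum
  congr 1
  refine Finset.filter_congr fun k _ => and_congr_left' (forall₂_congr fun j hj => ?_)
  rw [← Nat.add_assoc, hg.step_other _ j (by rwa [scanVar_mul_add_succ])]

theorem condProb_mul_empDen_sub_le_empNum (hπ0 : ∀ x, 0 ≤ π x) (s T t : ℕ) (y : GState N)
    (b : Bool) :
    condProb π (scanVar N hN (t + 1)) y b * empDen hN hg.X s T (t + 1) y - 3 ≤
      empNum hN hg.X s T (t + 1) y b := by
  have hherd := abs_sub_card_filter_lt_of_herding (hg.W_sweep_succ t · y)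
    (fun k => hg.W_mem_Ioc hπ0 (k * N + t) _ y) s T
  rw [abs_sub_lt_iff] at hherd
  rw [empDen_succ, hg.empNum_succ]
  cases b
  · have hsplit := Finset.card_filter_add_card_filter_not
      (s := {k ∈ Ico s (s + T) | ∀ j, j ≠ scanVar N hN (t + 1) → hg.X (k * N + t) j = y j})
      (fun k => hg.X (k * N + t + 1) (scanVar N hN (t + 1)) = true)
    simp only [Finset.filter_filter, Bool.not_eq_true] at hsplit
    have hfalse := condProb_true_add_condProb_false_le (π := π) (scanVar N hN (t + 1)) y
    have hden := Nat.cast_nonneg (α := ℝ)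
      #{k ∈ Ico s (s + T) | ∀ j, j ≠ scanVar N hN (t + 1) → hg.X (k * N + t) j = y j}
    rw [← hsplit, Nat.cast_add] at hherd ⊢
    nlinarith
  · linarith

/-- The iterative visiting bound of the paper. -/
theorem le_visitsIn_succ (hπ0 : ∀ x, 0 ≤ π x) {πmin : ℝ} (hπmin : 0 ≤ πmin)
    (hmin : ∀ i x b, 0 < condProb π i x b → πmin ≤ condProb π i x b) (s T t : ℕ)
    {F G : Finset (GState N)}
    (hFG : ∀ w ∈ F, ∃ w' ∈ G, 0 < stepKernel π (scanVar N hN (t + 1)) w w') :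
    πmin * visitsIn hg.X s T t F - 3 * #G ≤ visitsIn hg.X s T (t + 1) G := by
  set v := scanVar N hN (t + 1)
  set G' := {w' ∈ G | 0 < condProb π v w' (w' v)}
  have hcover : visitsIn hg.X s T t F ≤ ∑ w' ∈ G', empDen hN hg.X s T (t + 1) w' := by
    simp only [empDen_succ]
    refine (Finset.card_le_card fun k hk => ?_).trans Finset.card_biUnion_le
    obtain ⟨hk, hkF⟩ := Finset.mem_filter.1 hk
    obtain ⟨w', hw'G, hstep⟩ := hFG _ hkF
    obtain ⟨hoff, hpos⟩ := stepKernel_pos_iff.1 hstep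
    refine Finset.mem_biUnion.2 ⟨w', Finset.mem_filter.2 ⟨hw'G, ?_⟩, Finset.mem_filter.2 ⟨hk, hoff⟩⟩
    rwa [← condProb_congr hoff]
  have hherd : ∀ w' ∈ G',
      πmin * empDen hN hg.X s T (t + 1) w' - 3 ≤ visitsIn hg.X s T (t + 1) {w'} := by
    intro w' hw'
    have hle := hmin _ _ _ (Finset.mem_filter.1 hw').2
    have := hg.condProb_mul_empDen_sub_le_empNum hπ0 s T t w' (w' v)
    rw [empNum_self] at this
    simp only [visitsIn, Finset.mem_singleton]
    nlinarith [Nat.cast_nonneg (α := ℝ) (empDen hN hg.X s T (t + 1) w')]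
  have hsub : G' ⊆ G := Finset.filter_subset _ _
  suffices πmin * visitsIn hg.X s T t F ≤ visitsIn hg.X s T (t + 1) G + 3 * #G by linarith
  calc πmin * visitsIn hg.X s T t F
      ≤ ∑ w' ∈ G', πmin * empDen hN hg.X s T (t + 1) w' := by
        rw [← Finset.mul_sum]
        exact mul_le_mul_of_nonneg_left (by exact_mod_cast hcover) hπmin
    _ ≤ ∑ w' ∈ G', ((visitsIn hg.X s T (t + 1) {w'} : ℝ) + 3) :=
        Finset.sum_le_sum fun w' hw' => by linarith [hherd w' hw']
    _ = ∑ w' ∈ G', (visitsIn hg.X s T (t + 1) {w'} : ℝ) + 3 * #G' := by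
        rw [Finset.sum_add_distrib, Finset.sum_const, nsmul_eq_mul, mul_comm]
    _ ≤ visitsIn hg.X s T (t + 1) G + 3 * #G := by
        gcongr
        rw [← sum_visitsIn_singleton, Nat.cast_sum]
        exact Finset.sum_le_sum_of_subset_of_nonneg hsub fun _ _ _ => Nat.cast_nonneg _

theorem pow_mul_sub_le_visitsIn (hπ0 : ∀ x, 0 ≤ π x) {πmin : ℝ} (hπmin0 : 0 ≤ πmin)
    (hπmin1 : πmin ≤ 1) (hmin : ∀ i x b, 0 < condProb π i x b → πmin ≤ condProb π i x b)
    {L : ℕ} {x : GState N} (hreach : ∀ y, 0 < π y → 0 < scanKernel π hN 0 L y x) (s T : ℕ) :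
    πmin ^ L * T - L * (3 * 2 ^ N) ≤ visitsIn hg.X s T L {x} := by
  let F : ℕ → Finset (GState N) := fun j => {w | 0 < scanKernel π hN j (L - j) w x}
  have hF0 : visitsIn hg.X s T 0 (F 0) = T := by
    rw [visitsIn, Finset.filter_true_of_mem fun k _ => ?_, Nat.card_Ico, Nat.add_sub_cancel_left]
    simpa [F] using hreach _ (hg.pi_X_pos hπ0 _)
  have hFL : F L = {x} := by
    ext w
    simp only [F, Nat.sub_self, scanKernel, Matrix.one_apply, Finset.mem_filter,
      Finset.mem_univ, true_and, Finset.mem_singleton]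
    split_ifs <;> simp [*]
  have hstep : ∀ j < L, πmin * (visitsIn hg.X s T j (F j) : ℝ) - 3 * 2 ^ N ≤
      visitsIn hg.X s T (j + 1) (F (j + 1)) := by
    intro j hj
    have hcard : (#(F (j + 1)) : ℝ) ≤ 2 ^ N := by
      exact_mod_cast (Finset.card_le_univ _).trans_eq (by simp)
    have hsucc : ∀ w ∈ F j, ∃ w' ∈ F (j + 1), 0 < stepKernel π (scanVar N hN (j + 1)) w w' := by
      intro w hw
      have hlen : L - j = L - (j + 1) + 1 := by omega
      simp only [F, Finset.mem_filter, Finset.mem_univ, true_and, hlen] at hw ⊢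
      obtain ⟨w', hstep, hreach'⟩ := (scanKernel_succ_pos_iff hN hπ0).1 hw
      exact ⟨w', hreach', hstep⟩
    linarith [hg.le_visitsIn_succ hπ0 hπmin0 hmin s T j hsucc]
  have := pow_mul_sub_le_of_forall_lt hπmin0 hπmin1 (by positivity) hstep
  rwa [hF0, hFL] at this

theorem exists_pow_mul_sub_le_visits (hπ0 : ∀ x, 0 ≤ π x) {πmin : ℝ} (hπmin0 : 0 ≤ πmin)
    (hπmin1 : πmin ≤ 1) (hmin : ∀ i x b, 0 < condProb π i x b → πmin ≤ condProb π i x b)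
    (hirr : ∀ x y : GState N, 0 < π x → 0 < π y → ∃ n : ℕ, 0 < (sweepKernel π ^ n) x y) :
    ∃ (m : ℕ) (C : ℝ), 0 ≤ C ∧ ∀ i ≤ N, ∀ x, 0 < π x → ∀ T s : ℕ,
      πmin ^ m * T - C ≤ #{k ∈ Ico s (s + T) | hg.X (k * N + i) = x} := by
  obtain ⟨n, hn⟩ := exists_scanKernel_pos_of_irreducible hN hπ0 hirr
  refine ⟨(n + 1) * N, n + ((n + 1) * N : ℕ) * (3 * 2 ^ N), by positivity,
    fun i hi x hx T s => ?_⟩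
  have hvisits := hg.pow_mul_sub_le_visitsIn hπ0 hπmin0 hπmin1 hmin
    (fun y hy => hn y x hy hx i) s (T - n)
  have hshift : (visitsIn hg.X s (T - n) (n * N + i) {x} : ℝ) ≤
      #{k ∈ Ico s (s + T) | hg.X (k * N + i) = x} := by
    exact_mod_cast (visitsIn_add_mul_le hg.X s T n i {x}).trans_eq (by simp [visitsIn])
  have hLm : n * N + i ≤ (n + 1) * N := by rw [Nat.succ_mul]; omega
  have hL : ((n * N + i : ℕ) : ℝ) ≤ ((n + 1) * N : ℕ) := by exact_mod_cast hLm
  have hpow := pow_le_pow_of_le_one hπmin0 hπmin1 hLm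
  have hpow1 : πmin ^ ((n + 1) * N) ≤ 1 := pow_le_one₀ hπmin0 hπmin1
  have hT : (T : ℝ) ≤ (T - n : ℕ) + n := by exact_mod_cast le_tsub_add
  have hT' := Nat.cast_nonneg (α := ℝ) (T - n)
  have hn0 := Nat.cast_nonneg (α := ℝ) n
  nlinarith [mul_le_mul_of_nonneg_left hT (pow_nonneg hπmin0 ((n + 1) * N)),
    mul_le_mul_of_nonneg_right hpow hT', mul_le_of_le_one_left hn0 hpow1,
    mul_le_mul_of_nonneg_right hL (show (0 : ℝ) ≤ 3 * 2 ^ N by positivity)]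

end HerdedGibbs

noncomputable def visitingBound (N t : ℕ) (a : ℝ) : ℝ :=
  (⌈(t : ℝ) / (N : ℝ)⌉₊ : ℝ) * a ^ t + ∑ j ∈ Finset.range t, a ^ j * (2 : ℝ) ^ (min N j)

theorem sum_pow_le_visitingBound {N t : ℕ} {a : ℝ} (ha : 0 ≤ a) :
    ∑ j ∈ Finset.range t, a ^ j ≤ visitingBound N t a := by
  refine le_add_of_nonneg_of_le (by positivity) (Finset.sum_le_sum fun j _ => ?_)
  exact le_mul_of_one_le_right (by positivity) (one_le_pow₀ one_le_two)

theorem one_le_visitingBound {N t : ℕ} {a : ℝ} (ha : 0 ≤ a) (ht : 0 < t) :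
    1 ≤ visitingBound N t a := by
  obtain ⟨t, rfl⟩ := Nat.exists_eq_add_one_of_ne_zero ht.ne'
  exact le_trans (by simp [Finset.sum_range_succ']; positivity) (sum_pow_le_visitingBound ha)

theorem exists_pow_mul_sub_visitingBound_le {a C : ℝ} (ha0 : 0 < a) (ha1 : a ≤ 1) (hC : 0 ≤ C)
    (N m : ℕ) : ∃ t, 0 < t ∧ ∀ T c : ℝ, 0 ≤ T → 0 ≤ c → a ^ m * T - C ≤ c →
      a ^ t * T - visitingBound N t a ≤ c := by
  -- For `a < 1`, `visitingBound ≥ 1` absorbs `C` once `(C + 1) a ^ t ≤ a ^ m`; for `a = 1`,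
  -- `visitingBound N t 1 ≥ t ≥ C`.
  rcases ha1.lt_or_eq with ha1 | rfl
  · obtain ⟨t, ht⟩ :=
      exists_pow_lt_of_lt_one (div_pos (pow_pos ha0 m) (by linarith : 0 < C + 1)) ha1
    refine ⟨t + 1, t.succ_pos, fun T c hT hc h => ?_⟩
    have hB : 1 ≤ visitingBound N (t + 1) a := one_le_visitingBound ha0.le t.succ_pos
    have hrate : (C + 1) * a ^ (t + 1) ≤ a ^ m := by
      rw [← le_div_iff₀' (by linarith)]
      exact (pow_le_pow_of_le_one ha0.le ha1.le t.le_succ).trans ht.le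
    by_cases hsmall : a ^ (t + 1) * T ≤ visitingBound N (t + 1) a
    · linarith
    · nlinarith [mul_le_mul_of_nonneg_right hrate hT]
  · refine ⟨⌈C⌉₊ + 1, Nat.succ_pos _, fun T c _ _ h => ?_⟩
    have hB := sum_pow_le_visitingBound (N := N) (t := ⌈C⌉₊ + 1) zero_le_one
    simp only [one_pow, Finset.sum_const, Finset.card_range, nsmul_eq_mul, mul_one] at hB h ⊢
    push_cast at hB
    linarith [Nat.le_ceil C]

theorem herded_gibbs_linear_visiting_rate_general {N : ℕ} (hN : 0 < N)
    (π : GState N → ℝ) (hπ0 : ∀ x, 0 ≤ π x)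
    (hg : HerdedGibbs N hN π)
    (πmin : ℝ)
    (hmin : IsLeast {p : ℝ | 0 < p ∧ ∃ (i : Fin N) (x : GState N) (b : Bool),
      p = condProb π i x b} πmin)
    (hirr : ∀ x y : GState N, 0 < π x → 0 < π y → ∃ n : ℕ, 0 < (sweepKernel π ^ n) x y) :
    ∃ tstar : ℕ, 0 < tstar ∧ ∃ l B : ℝ,
      l = πmin ^ tstar ∧
      B = (⌈(tstar : ℝ) / (N : ℝ)⌉₊ : ℝ) * πmin ^ tstar
            + ∑ j ∈ Finset.range tstar, πmin ^ j * (2 : ℝ) ^ (min N j) ∧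
      0 < l ∧ 0 < B ∧
      ∀ i : ℕ, 1 ≤ i → i ≤ N → ∀ x : GState N, 0 < π x → ∀ T s : ℕ,
        l * (T : ℝ) - B
          ≤ (((Finset.Ico s (s + T)).filter fun k => hg.X (k * N + i) = x).card : ℝ) := by
  obtain ⟨⟨hπmin0, i₀, x₀, b₀, hπmin⟩, hleast⟩ := hmin
  have hπmin1 : πmin ≤ 1 := hπmin ▸ condProb_le_one hπ0 i₀ x₀ b₀
  obtain ⟨m, C, hC, hvisits⟩ := hg.exists_pow_mul_sub_le_visits hπ0 hπmin0.le hπmin1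
    (fun i x b h => hleast ⟨h, i, x, b, rfl⟩) hirr
  obtain ⟨t, ht, hrate⟩ := exists_pow_mul_sub_visitingBound_le hπmin0 hπmin1 hC N m
  refine ⟨t, ht, _, _, rfl, rfl, pow_pos hπmin0 t, ?_, fun i _ hi x hx T s =>
    hrate T _ (Nat.cast_nonneg T) (Nat.cast_nonneg _) (hvisits i hi x hx T s)⟩
  exact one_pos.trans_le (one_le_visitingBound hπmin0.le ht)

/-- Linear visiting rate: for herded Gibbs on a fully connected graph with
fixed scan order and irreducible corresponding Gibbs chain, there are constants l > 0 and
B > 0 — one may take l = π_min^{t*} and B = ⌈t*/N⌉·π_min^{t*} + ∑_{j<t*} π_min^j·2^{min(N,j)}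
for a suitable path length t* — such that every support state is visited at every substep
at least l·T − B times in any window of T sweeps. -/
theorem herded_gibbs_linear_visiting_rate {N : ℕ} (hN : 0 < N)
    (π : GState N → ℝ) (hπ0 : ∀ x, 0 ≤ π x) (hπ1 : ∑ x, π x = 1)
    (hg : HerdedGibbs N hN π)
    (πmin : ℝ)
    (hmin : IsLeast {p : ℝ | 0 < p ∧ ∃ (i : Fin N) (x : GState N) (b : Bool),
      p = condProb π i x b} πmin)
    (hirr : ∀ x y : GState N, 0 < π x → 0 < π y → ∃ n : ℕ, 0 < (sweepKernel π ^ n) x y) :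
    ∃ tstar : ℕ, 0 < tstar ∧ ∃ l B : ℝ,
      l = πmin ^ tstar ∧
      B = (⌈(tstar : ℝ) / (N : ℝ)⌉₊ : ℝ) * πmin ^ tstar
            + ∑ j ∈ Finset.range tstar, πmin ^ j * (2 : ℝ) ^ (min N j) ∧
      0 < l ∧ 0 < B ∧
      ∀ i : ℕ, 1 ≤ i → i ≤ N → ∀ x : GState N, 0 < π x → ∀ T s : ℕ,
        l * (T : ℝ) - B
          ≤ (((Finset.Ico s (s + T)).filter fun k => hg.X (k * N + i) = x).card : ℝ) :=
  herded_gibbs_linear_visiting_rate_general hN π hπ0 hg πmin hmin hirr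
end
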